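/- Let r ∈ (0,1] and n ≥ 2 be an integer. For all integers i with 1 ≤ i ≤ n−1, we have (n−i)·((n+1−i)/(n−i))^r + 1 ≤ (n−i+1)·((n+2−i)/(n+1−i))^r. -/
import Mathlib

private lemma geom_superadd (r a b c d : ℝ) (hr0 : 0 ≤ r) (hr1 : r ≤ 1)
    (ha : 0 < a) (hb : 0 < b) (hc : 0 < c) (hd : 0 < d) :
    a ^ (1 - r) * b ^ r + c ^ (1 - r) * d ^ r ≤ (a + c) ^ (1 - r) * (b + d) ^ r := by
  have hac : (0:ℝ) < a + c := by linarith
  have hbd : (0:ℝ) < b + d := by linarith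
  have hP : (0:ℝ) < (a + c) ^ (1 - r) * (b + d) ^ r := by positivity
  have key : ∀ u v : ℝ, 0 < u → 0 < v →
      u ^ (1 - r) * v ^ r ≤
        ((1 - r) * (u / (a + c)) + r * (v / (b + d))) * ((a + c) ^ (1 - r) * (b + d) ^ r) := by
    intro u v hu hv
    have h := Real.geom_mean_le_arith_mean2_weighted (by linarith : (0:ℝ) ≤ 1 - r) hr0
      (le_of_lt (div_pos hu hac)) (le_of_lt (div_pos hv hbd)) (by ring)
    have e : (u / (a + c)) ^ (1 - r) * (v / (b + d)) ^ r * ((a + c) ^ (1 - r) * (b + d) ^ r)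
        = u ^ (1 - r) * v ^ r := by
      rw [Real.div_rpow hu.le hac.le, Real.div_rpow hv.le hbd.le]
      field_simp
    calc u ^ (1 - r) * v ^ r
        = (u / (a + c)) ^ (1 - r) * (v / (b + d)) ^ r * ((a + c) ^ (1 - r) * (b + d) ^ r) :=
          e.symm
      _ ≤ ((1 - r) * (u / (a + c)) + r * (v / (b + d))) * ((a + c) ^ (1 - r) * (b + d) ^ r) :=
          mul_le_mul_of_nonneg_right h hP.le
  have h1 := key a b ha hb
  have h2 := key c d hc hd
  have hsum : ((1 - r) * (a / (a + c)) + r * (b / (b + d)))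
      + ((1 - r) * (c / (a + c)) + r * (d / (b + d))) = 1 := by
    field_simp
    ring
  calc a ^ (1 - r) * b ^ r + c ^ (1 - r) * d ^ r
      ≤ (((1 - r) * (a / (a + c)) + r * (b / (b + d)))
          + ((1 - r) * (c / (a + c)) + r * (d / (b + d)))) * ((a + c) ^ (1 - r) * (b + d) ^ r) := by
        rw [add_mul]; exact add_le_add h1 h2
    _ = (a + c) ^ (1 - r) * (b + d) ^ r := by rw [hsum, one_mul]

theorem condition_for_integers (r : ℝ) (hr0 : 0 < r) (hr1 : r ≤ 1) (n : ℕ) (hn : 2 ≤ n)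
    (i : ℕ) (hi1 : 1 ≤ i) (hi2 : i ≤ n - 1) :
    ((n : ℝ) - i) * (((n : ℝ) + 1 - i) / ((n : ℝ) - i)) ^ r + 1 ≤
      ((n : ℝ) - i + 1) * (((n : ℝ) + 2 - i) / ((n : ℝ) + 1 - i)) ^ r := by
  have hin : i + 1 ≤ n := by omega
  have hx : (1:ℝ) ≤ (n:ℝ) - i := by
    have : ((i:ℝ) + 1) ≤ (n:ℝ) := by exact_mod_cast hin
    linarith
  set x : ℝ := (n:ℝ) - i with hxdef
  have hx0 : 0 < x := by linarith
  have hx10 : 0 < x + 1 := by linarith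
  have e1 : (n:ℝ) + 1 - i = x + 1 := by rw [hxdef]; ring
  have e2 : (n:ℝ) + 2 - i = x + 2 := by rw [hxdef]; ring
  rw [e1, e2]
  -- rewrite t * ((t+1)/t)^r as t^(1-r) * (t+1)^r
  have key : ∀ t : ℝ, 0 < t → t * ((t + 1) / t) ^ r = t ^ (1 - r) * (t + 1) ^ r := by
    intro t ht
    rw [Real.div_rpow (by linarith) ht.le, Real.rpow_sub ht, Real.rpow_one]
    field_simp
  rw [key x hx0, show x + 2 = x + 1 + 1 by ring, key (x + 1) hx10]
  have h := geom_superadd r x (x + 1) 1 1 hr0.le hr1 hx0 hx10 one_pos one_pos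
  rw [Real.one_rpow, Real.one_rpow, mul_one] at h
  convert h using 2
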